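/- Let M ≥ 1, let x¹, …, xᴹ ∈ ℝⁿ, let w ∈ ℝⁿ with w ≠ 0, and let b ∈ ℝ. Suppose max_{1≤i≤M} ‖xⁱ‖ ≤ max_{1≤i≤M} |⟨w, xⁱ⟩ + b| / ‖w‖. Then the radius–margin product satisfies the convex bound (max_{1≤i≤M} ‖xⁱ‖)·‖w‖ ≤ Σ_{i=1}^{M} (⟨w, xⁱ⟩ + b)² / ‖w‖₂² + ‖w‖₂². -/

import Mathlib

/-!
Let `j` be the sample farthest from the hyperplane, with score `sⱼ = ⟪w, xʲ⟫ + b`; the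
hypothesis says `R ‖w‖ ≤ |sⱼ|`. By AM–GM, `2 |sⱼ| ≤ sⱼ² / ‖w‖² + ‖w‖²`, and the single nonnegative
term `sⱼ² / ‖w‖²` is at most the sum of all of them.
-/

open scoped RealInnerProductSpace

lemma two_mul_abs_le_sq_div_add (a : ℝ) {t : ℝ} (ht : 0 < t) : 2 * |a| ≤ a ^ 2 / t + t := by
  rw [div_add' _ _ _ ht.ne', le_div_iff₀ ht]
  nlinarith [sq_nonneg (|a| - t), sq_abs a]

/-- If the maximum distance of a sample to the hyperplane dominates the
radius of the data, then the radius–norm product is bounded by the convex,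
differentiable bound: the sum of squared scores over the squared norm plus
the squared norm. -/
theorem radius_margin_sum_bound
    (n M : ℕ) (hM : 0 < M)
    (x : Fin M → EuclideanSpace ℝ (Fin n))
    (w : EuclideanSpace ℝ (Fin n)) (hw : w ≠ 0) (b : ℝ)
    (hdom : (Finset.univ.sup' ⟨⟨0, hM⟩, Finset.mem_univ _⟩
        (fun i : Fin M => ‖x i‖)) ≤
      Finset.univ.sup' ⟨⟨0, hM⟩, Finset.mem_univ _⟩
        (fun i : Fin M => |⟪w, x i⟫ + b| / ‖w‖)) :
    (Finset.univ.sup' ⟨⟨0, hM⟩, Finset.mem_univ _⟩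
        (fun i : Fin M => ‖x i‖)) * ‖w‖ ≤
      (∑ i : Fin M, (⟪w, x i⟫ + b) ^ 2 / ‖w‖ ^ 2) + ‖w‖ ^ 2 := by
  have hw_pos : 0 < ‖w‖ := norm_pos_iff.mpr hw
  obtain ⟨j, -, hj⟩ := Finset.exists_mem_eq_sup' ⟨⟨0, hM⟩, Finset.mem_univ _⟩
    (fun i : Fin M => |⟪w, x i⟫ + b| / ‖w‖)
  rw [hj, le_div_iff₀ hw_pos] at hdom
  calc _ ≤ |⟪w, x j⟫ + b| := hdom
    _ ≤ 2 * |⟪w, x j⟫ + b| := by linarith [abs_nonneg (⟪w, x j⟫ + b)]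
    _ ≤ (⟪w, x j⟫ + b) ^ 2 / ‖w‖ ^ 2 + ‖w‖ ^ 2 := two_mul_abs_le_sq_div_add _ (by positivity)
    _ ≤ _ := by
      gcongr
      exact Finset.single_le_sum (f := fun i => (⟪w, x i⟫ + b) ^ 2 / ‖w‖ ^ 2)
        (fun i _ => by positivity) (Finset.mem_univ j)
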